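/- Let G be a word-hyperbolic group with finite generating set A and Cayley graph X = Γ(G,A) with δ-trim geodesic triangles. Let x ∈ G be an element of infinite order. Then for every L > 0 there exists a constant T = T(x, L) with lim_{L→∞} T(x, L) = ∞ and with the following property: if g ∈ G is such that (xg, g)₁ ≥ L, then (g, ⟨x⟩)₁ ≥ T, where ⟨x⟩ is the cyclic subgroup generated by x. -/

import Mathlib

variable {G : Type*} [Group G]

/-- The set of lengths of words in the alphabet `A ∪ A⁻¹` representing `g`. -/
def wordLengthSet (A : Finset G) (g : G) : Set ℕ :=
  {n | ∃ l : List G, l.length = n ∧ (∀ x ∈ l, x ∈ A ∨ x⁻¹ ∈ A) ∧ l.prod = g}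

/-- The word length of `g` with respect to the generating set `A`. -/
noncomputable def wl (A : Finset G) (g : G) : ℕ :=
  sInf (wordLengthSet A g)

/-- The word metric on `G` (distance between vertices of the Cayley graph `Γ(G,A)`). -/
noncomputable def wdist (A : Finset G) (g h : G) : ℕ :=
  wl A (g⁻¹ * h)

/-- A (discrete) geodesic from `x` to `y` in the Cayley graph `Γ(G,A)`. -/
def IsGeodesic (A : Finset G) (γ : ℕ → G) (x y : G) : Prop :=
  γ 0 = x ∧ γ (wdist A x y) = y ∧
    ∀ i j : ℕ, i ≤ wdist A x y → j ≤ wdist A x y →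
      wdist A (γ i) (γ j) = Nat.dist i j

/-- The Gromov product `(x,y)_z` in the Cayley graph `Γ(G,A)`. -/
noncomputable def gp (A : Finset G) (z x y : G) : ℝ :=
  ((wdist A z x : ℝ) + (wdist A z y : ℝ) - (wdist A x y : ℝ)) / 2

/-- All geodesic triangles in `Γ(G,A)` are `δ`-thin: each side is contained in the
closed `δ`-neighbourhood of the union of the other two sides. -/
def IsThin (A : Finset G) (δ : ℝ) : Prop :=
  ∀ x y z : G, ∀ γ₁ γ₂ γ₃ : ℕ → G,
    IsGeodesic A γ₁ x y → IsGeodesic A γ₂ y z → IsGeodesic A γ₃ x z →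
    ∀ i, i ≤ wdist A x y →
      (∃ j, j ≤ wdist A y z ∧ (wdist A (γ₁ i) (γ₂ j) : ℝ) ≤ δ) ∨
      (∃ j, j ≤ wdist A x z ∧ (wdist A (γ₁ i) (γ₃ j) : ℝ) ≤ δ)

/-- All geodesic triangles in `Γ(G,A)` are `δ`-trim: points on two sides of a triangle
which are equidistant from the common vertex, up to the Gromov product of the two other
vertices at that vertex, are `δ`-close. -/
def TrimCayley (A : Finset G) (δ : ℝ) : Prop :=
  ∀ x y z : G, ∀ γ₁ γ₂ : ℕ → G, IsGeodesic A γ₁ z x → IsGeodesic A γ₂ z y →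
    ∀ i : ℕ, (i : ℝ) ≤ gp A z x y → (wdist A (γ₁ i) (γ₂ i) : ℝ) ≤ δ

/-- `G` is word-hyperbolic: it is finitely generated and for every finite generating
set `A` there is `δ ≥ 0` such that all geodesic triangles in `Γ(G,A)` are `δ`-thin. -/
def WordHyperbolic (G : Type*) [Group G] : Prop :=
  (∃ A : Finset G, Subgroup.closure (A : Set G) = ⊤) ∧
    ∀ A : Finset G, Subgroup.closure (A : Set G) = ⊤ →
      ∃ δ : ℝ, 0 ≤ δ ∧ IsThin A δ

/-- `G` is virtually cyclic (elementary). -/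
def VirtuallyCyclic (G : Type*) [Group G] : Prop :=
  ∃ H : Subgroup G, IsCyclic H ∧ H.FiniteIndex

/-- `H` is a quasiconvex subgroup of `G`: for every finite generating set `A` there is
`ε ≥ 0` such that every geodesic of `Γ(G,A)` with both endpoints in `H` stays in the
`ε`-neighbourhood of `H`. -/
def QCSubgroup (H : Subgroup G) : Prop :=
  ∀ A : Finset G, Subgroup.closure (A : Set G) = ⊤ →
    ∃ ε : ℝ, 0 ≤ ε ∧ ∀ h₁ h₂ : G, h₁ ∈ H → h₂ ∈ H →
      ∀ γ : ℕ → G, IsGeodesic A γ h₁ h₂ →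
        ∀ i, i ≤ wdist A h₁ h₂ → ∃ h ∈ H, (wdist A (γ i) h : ℝ) ≤ ε

/-- `F` is conjugacy separated from `H` in `G`: `g⁻¹Hg ∩ F = 1` for every `g ∈ G`. -/
def ConjSeparated (H F : Subgroup G) : Prop :=
  ∀ g x : G, x ∈ F → g * x * g⁻¹ ∈ H → x = 1

section Basics

variable (A : Finset G) (hA : Subgroup.closure (A : Set G) = ⊤)
include hA

theorem wls_nonempty (g : G) : (wordLengthSet A g).Nonempty := by
  have hg : g ∈ Subgroup.closure (A : Set G) := hA ▸ Subgroup.mem_top g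
  have hg2 : g ∈ (Subgroup.closure (A : Set G)).toSubmonoid := hg
  rw [Subgroup.closure_toSubmonoid] at hg2
  obtain ⟨l, h1, h2⟩ := Submonoid.exists_list_of_mem_closure hg2
  refine ⟨l.length, l, rfl, ?_, h2⟩
  intro y hy
  rcases h1 y hy with h | h
  · exact Or.inl h
  · exact Or.inr (by simpa using h)

theorem wl_mem (g : G) : wl A g ∈ wordLengthSet A g :=
  Nat.sInf_mem (wls_nonempty A hA g)

omit hA in
theorem wl_le {g : G} {n : ℕ} (hn : n ∈ wordLengthSet A g) : wl A g ≤ n :=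
  Nat.sInf_le hn

omit hA in
theorem wl_one : wl A (1 : G) = 0 :=
  Nat.le_zero.mp (wl_le A (show (0:ℕ) ∈ wordLengthSet A 1 from ⟨[], rfl, by simp, rfl⟩))

theorem wl_inv_le (g : G) : wl A g⁻¹ ≤ wl A g := by
  obtain ⟨l, hlen, hmem, hprod⟩ := wl_mem A hA g
  refine wl_le A ⟨(l.map (·⁻¹)).reverse, by simp [hlen], ?_, ?_⟩
  · intro y hy
    simp only [List.mem_reverse, List.mem_map] at hy
    obtain ⟨z, hz, rfl⟩ := hy
    rcases hmem z hz with h | h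
    · exact Or.inr (by simpa using h)
    · exact Or.inl h
  · rw [List.prod_reverse_noncomm, List.map_map]
    simp [hprod]

theorem wl_inv (g : G) : wl A g⁻¹ = wl A g :=
  le_antisymm (wl_inv_le A hA g) (by simpa using wl_inv_le A hA g⁻¹)

theorem wl_mul_le (g h : G) : wl A (g * h) ≤ wl A g + wl A h := by
  obtain ⟨l, hlen, hmem, hprod⟩ := wl_mem A hA g
  obtain ⟨l', hlen', hmem', hprod'⟩ := wl_mem A hA h
  refine wl_le A ⟨l ++ l', by simp [hlen, hlen'], ?_, by simp [hprod, hprod']⟩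
  intro y hy
  rcases List.mem_append.mp hy with h | h
  · exact hmem y h
  · exact hmem' y h

theorem wl_eq_zero {g : G} (h : wl A g = 0) : g = 1 := by
  obtain ⟨l, hlen, _, hprod⟩ := wl_mem A hA g
  rw [h, List.length_eq_zero_iff] at hlen
  simp [hlen] at hprod
  exact hprod.symm

omit hA in
theorem wdist_self (g : G) : wdist A g g = 0 := by simp [wdist, wl_one]

theorem wdist_symm (g h : G) : wdist A g h = wdist A h g := by
  rw [wdist, wdist, ← wl_inv A hA (g⁻¹ * h)]; simp [mul_comm]

theorem wdist_triangle (g h k : G) : wdist A g k ≤ wdist A g h + wdist A h k := by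
  have : g⁻¹ * k = (g⁻¹ * h) * (h⁻¹ * k) := by group
  rw [wdist, this]
  exact wl_mul_le A hA _ _

omit hA in
theorem wdist_left_inv (a g h : G) : wdist A (a * g) (a * h) = wdist A g h := by
  simp [wdist, mul_assoc]

omit hA in
theorem wdist_one_left (g : G) : wdist A 1 g = wl A g := by simp [wdist]

theorem wdist_eq_zero {g h : G} (hd : wdist A g h = 0) : g = h := by
  have h1 : g⁻¹ * h = 1 := wl_eq_zero A hA hd
  have : g * (g⁻¹ * h) = g * 1 := by rw [h1]
  simpa [mul_assoc] using this.symm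

end Basics

section Geod



variable (A : Finset G) (hA : Subgroup.closure (A : Set G) = ⊤)
include hA

theorem exists_geodesic_one (g : G) : ∃ γ : ℕ → G, IsGeodesic A γ 1 g := by
  obtain ⟨l, hlen, hmem, hprod⟩ := wl_mem A hA g
  set n := wl A g with hn
  set γ : ℕ → G := fun i => (l.take i).prod with hγ
  have hγ0 : γ 0 = 1 := by simp [hγ]
  have hγn : γ n = g := by
    rw [hγ, ← hlen]; simp [hprod]
  have key1 : ∀ i j : ℕ, i ≤ j → j ≤ n → wdist A (γ i) (γ j) ≤ j - i := by
    intro i j hij hj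
    have hdecomp : l.take j = l.take i ++ (l.take j).drop i := by
      conv_lhs => rw [← List.take_append_drop i (l.take j)]
      rw [List.take_take, min_eq_left hij]
    have hmul : γ j = γ i * ((l.take j).drop i).prod := by
      show (l.take j).prod = (l.take i).prod * ((l.take j).drop i).prod
      conv_lhs => rw [hdecomp]
      rw [List.prod_append]
    have : (γ i)⁻¹ * γ j = ((l.take j).drop i).prod := by
      rw [hmul]; group
    rw [wdist, this]
    refine le_trans (wl_le A ⟨(l.take j).drop i, rfl, ?_, rfl⟩) ?_
    · intro y hy
      exact hmem y (List.take_subset j l (List.drop_subset _ _ hy))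
    · rw [List.length_drop, List.length_take, hlen]
      omega
  have key3 : ∀ i : ℕ, i ≤ n → wdist A 1 (γ i) = i := by
    intro i hi
    have h1 : wdist A 1 (γ i) ≤ i := by
      have := key1 0 i (Nat.zero_le i) hi
      rw [hγ0] at this; simpa using this
    have h2 : n ≤ wdist A 1 (γ i) + (n - i) := by
      have htr := wdist_triangle A hA 1 (γ i) (γ n)
      rw [hγn] at htr
      have := key1 i n hi le_rfl
      rw [hγn] at this
      have hng : wdist A 1 g = n := by rw [wdist_one_left]
      omega
    omega
  refine ⟨γ, hγ0, ?_, ?_⟩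
  · rw [wdist_one_left, ← hn, hγn]
  · rw [wdist_one_left, ← hn]
    intro i j hi hj
    have main : ∀ i j : ℕ, i ≤ j → j ≤ n → wdist A (γ i) (γ j) = j - i := by
      intro i j hij hj
      have h1 := key1 i j hij hj
      have h2 := wdist_triangle A hA 1 (γ i) (γ j)
      rw [key3 i (le_trans hij hj), key3 j hj] at h2
      omega
    rcases le_total i j with h | h
    · rw [main i j h hj, Nat.dist_eq_sub_of_le h]
    · rw [wdist_symm A hA, main j i h hi, Nat.dist_eq_sub_of_le_right h]

omit hA in
theorem IsGeodesic.translate {γ : ℕ → G} {x y : G} (a : G) (h : IsGeodesic A γ x y) :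
    IsGeodesic A (fun i => a * γ i) (a * x) (a * y) := by
  obtain ⟨h0, h1, h2⟩ := h
  have hd : wdist A (a * x) (a * y) = wdist A x y := wdist_left_inv A a x y
  refine ⟨by show a * γ 0 = a * x; rw [h0], ?_, ?_⟩
  · show a * γ (wdist A (a*x) (a*y)) = a * y
    rw [hd, h1]
  · intro i j hi hj
    rw [hd] at hi hj
    show wdist A (a * γ i) (a * γ j) = Nat.dist i j
    rw [wdist_left_inv]
    exact h2 i j hi hj

theorem exists_geodesic (a b : G) : ∃ γ : ℕ → G, IsGeodesic A γ a b := by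
  obtain ⟨γ, hγ⟩ := exists_geodesic_one A hA (a⁻¹ * b)
  refine ⟨fun i => a * γ i, ?_⟩
  have := hγ.translate A a
  simpa using this

theorem IsGeodesic.reverse {γ : ℕ → G} {x y : G} (h : IsGeodesic A γ x y) :
    IsGeodesic A (fun i => γ (wdist A x y - i)) y x := by
  obtain ⟨h0, h1, h2⟩ := h
  have hd : wdist A y x = wdist A x y := wdist_symm A hA y x
  refine ⟨by simpa using h1, by rw [hd]; simpa using h0, ?_⟩
  intro i j hi hj
  rw [hd] at hi hj
  rw [h2 _ _ (Nat.sub_le _ _) (Nat.sub_le _ _)]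
  simp [Nat.dist]; omega

end Geod

section Balls

def genF (A : Finset G) [DecidableEq G] : Finset G := A ∪ A.image (·⁻¹) ∪ {1}

def ballF (A : Finset G) [DecidableEq G] : ℕ → Finset G
  | 0 => {1}
  | n+1 => ((genF A) ×ˢ ballF A n).image fun p => p.1 * p.2

theorem mem_ballF (A : Finset G) [DecidableEq G] :
    ∀ (n : ℕ) (l : List G), (∀ y ∈ l, y ∈ A ∨ y⁻¹ ∈ A) → l.length ≤ n →
      l.prod ∈ ballF A n := by
  intro n
  induction n with
  | zero =>
    intro l _ hl
    have : l = [] := List.length_eq_zero_iff.mp (Nat.le_zero.mp hl)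
    simp [this, ballF]
  | succ n ih =>
    intro l hmem hl
    match l with
    | [] =>
      have h1 : (1 : G) ∈ ballF A n := by simpa using ih [] (by simp) (by simp)
      simp only [List.prod_nil, ballF, Finset.mem_image]
      exact ⟨(1, 1), by simp [genF, h1]⟩
    | a :: l' =>
      have ha : a ∈ genF A := by
        rcases hmem a (by simp) with h | h
        · simp [genF, h]
        · simp only [genF, Finset.mem_union, Finset.mem_image]
          exact Or.inl (Or.inr ⟨a⁻¹, h, by simp⟩)
      have hl' : l'.prod ∈ ballF A n := by
        refine ih l' (fun y hy => hmem y (by simp [hy])) ?_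
        simpa using Nat.succ_le_succ_iff.mp hl
      simp only [List.prod_cons, ballF, Finset.mem_image]
      exact ⟨(a, l'.prod), by simp [ha, hl'], rfl⟩

theorem wl_mem_ballF (A : Finset G) [DecidableEq G]
    (hA : Subgroup.closure (A : Set G) = ⊤) {g : G} {n : ℕ} (h : wl A g ≤ n) :
    g ∈ ballF A n := by
  obtain ⟨l, hlen, hmem, hprod⟩ := wl_mem A hA g
  rw [← hprod]
  exact mem_ballF A n l hmem (by omega)

omit [Group G] in
theorem exists_infinite_fiber' {f : ℕ → G} {s : Finset G} (hf : ∀ i, f i ∈ s) :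
    ∃ v : G, {i : ℕ | f i = v}.Infinite := by
  by_contra hcon
  push_neg at hcon
  have : (Set.univ : Set ℕ) ⊆ ⋃ v ∈ (s : Set G), {i : ℕ | f i = v} := by
    intro i _
    simp only [Set.mem_iUnion]
    exact ⟨f i, hf i, rfl⟩
  exact Set.infinite_univ (Set.Finite.subset (Set.Finite.biUnion s.finite_toSet
    fun v _ => hcon v) this)

end Balls

section GP

variable (A : Finset G) (hA : Subgroup.closure (A : Set G) = ⊤)
include hA

theorem gp_nonneg (z x y : G) : 0 ≤ gp A z x y := by
  have h := wdist_triangle A hA x z y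
  have hs : wdist A x z = wdist A z x := wdist_symm A hA x z
  rw [hs] at h
  rw [gp]
  have : (wdist A x y : ℝ) ≤ (wdist A z x : ℝ) + (wdist A z y : ℝ) := by
    exact_mod_cast h
  linarith

theorem gp_le_left (z x y : G) : gp A z x y ≤ (wdist A z x : ℝ) := by
  have h := wdist_triangle A hA z y x
  have hs : wdist A y x = wdist A x y := wdist_symm A hA y x
  rw [hs] at h
  have : (wdist A z y : ℝ) ≤ (wdist A z x : ℝ) + (wdist A x y : ℝ) := by
    exact_mod_cast wdist_triangle A hA z x y
  rw [gp]; linarith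

theorem gp_le_right (z x y : G) : gp A z x y ≤ (wdist A z y : ℝ) := by
  have : (wdist A z x : ℝ) ≤ (wdist A z y : ℝ) + (wdist A x y : ℝ) := by
    have h := wdist_triangle A hA z y x
    have hs : wdist A y x = wdist A x y := wdist_symm A hA y x
    rw [hs] at h
    exact_mod_cast h
  rw [gp]; linarith

theorem gp_symm (z x y : G) : gp A z x y = gp A z y x := by
  rw [gp, gp, wdist_symm A hA x y]
  ring

theorem gp_lower_via_point (g y p : G) (i : ℕ)
    (h1 : wdist A 1 p = i) (h2 : wdist A 1 p + wdist A p g ≤ wdist A 1 g) :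
    (i : ℝ) - (wdist A p y : ℝ) ≤ gp A 1 g y := by
  have t1 : wdist A g y ≤ wdist A g p + wdist A p y := wdist_triangle A hA g p y
  have t2 : wdist A 1 p ≤ wdist A 1 y + wdist A y p := wdist_triangle A hA 1 y p
  have s1 : wdist A g p = wdist A p g := wdist_symm A hA g p
  have s2 : wdist A y p = wdist A p y := wdist_symm A hA y p
  rw [gp]
  have c1 : (wdist A g y : ℝ) ≤ (wdist A p g : ℝ) + (wdist A p y : ℝ) := by
    rw [← s1]; exact_mod_cast t1
  have c2 : (i : ℝ) ≤ (wdist A 1 y : ℝ) + (wdist A p y : ℝ) := by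
    rw [← h1, ← s2]; exact_mod_cast t2
  have c3 : (i : ℝ) + (wdist A p g : ℝ) ≤ (wdist A 1 g : ℝ) := by
    rw [← h1]; exact_mod_cast h2
  linarith

end GP


section Track

variable (A : Finset G) (hA : Subgroup.closure (A : Set G) = ⊤)
include hA

theorem rdist_triangle (g h k : G) :
    (wdist A g k : ℝ) ≤ (wdist A g h : ℝ) + (wdist A h k : ℝ) := by
  exact_mod_cast wdist_triangle A hA g h k

theorem track {δ : ℝ} (htrim : TrimCayley A δ) (c v : G) (γ π : ℕ → G)
    (hγ : IsGeodesic A γ 1 c) (hπ : IsGeodesic A π 1 (v * c))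
    (j : ℕ) (hj1 : (j : ℝ) ≤ gp A 1 c (v * c))
    (hj2 : wdist A 1 (v * c) + wl A v ≤ 2 * j + wdist A 1 c) :
    (wdist A (γ j) (v * γ ((j + wdist A 1 c) - wdist A 1 (v * c))) : ℝ) ≤ δ + δ := by
  set s := wdist A 1 c with hs
  set Q := wdist A 1 (v * c) with hQ
  set R := wl A v with hR
  -- basic bounds
  have hjQ : j ≤ Q := by
    have := le_trans hj1 (gp_le_right A hA 1 c (v * c))
    exact_mod_cast this
  have hjs : j ≤ s := by
    have := le_trans hj1 (gp_le_left A hA 1 c (v * c))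
    exact_mod_cast this
  have htri : Q ≤ R + s := by
    have h1 := wl_mul_le A hA v c
    rw [hQ, wdist_one_left]
    rw [hs, wdist_one_left]
    exact h1
  have hQjs : Q ≤ j + s := by omega
  set k := (j + s) - Q with hk
  have hks : k ≤ s := by omega
  -- step 1 : trim at 1 in triangle (1, c, vc)
  have step1 : (wdist A (γ j) (π j) : ℝ) ≤ δ := htrim c (v * c) 1 γ π hγ hπ j hj1
  -- step 2 : trim at vc in triangle (vc, 1, v)
  have hrevπ : IsGeodesic A (fun t => π (Q - t)) (v * c) 1 := by
    have := hπ.reverse A hA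
    rw [hQ]
    exact this
  have hrevγ : IsGeodesic A (fun t => v * γ (s - t)) (v * c) v := by
    have h1 := (hγ.reverse A hA).translate A v
    rw [hs]
    simpa using h1
  have hgpq : gp A (v * c) 1 v = ((Q : ℝ) + (s : ℝ) - (R : ℝ)) / 2 := by
    have e1 : wdist A (v * c) 1 = Q := by rw [hQ]; exact wdist_symm A hA _ _
    have e2 : wdist A (v * c) v = s := by
      have : wdist A (v * c) (v * 1) = wdist A c 1 := wdist_left_inv A v c 1
      rw [hs]
      simpa [wdist_symm A hA c 1] using this
    have e3 : wdist A 1 v = R := by rw [hR, wdist_one_left]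
    rw [gp, e1, e2, e3]
  have ht : ((Q - j : ℕ) : ℝ) ≤ gp A (v * c) 1 v := by
    rw [hgpq]
    rw [Nat.cast_sub hjQ]
    have hc2 : (Q : ℝ) + (R : ℝ) ≤ 2 * (j : ℝ) + (s : ℝ) := by exact_mod_cast hj2
    linarith
  have step2' := htrim 1 v (v * c) _ _ hrevπ hrevγ (Q - j) ht
  have e4 : Q - (Q - j) = j := by omega
  have e5 : s - (Q - j) = k := by omega
  simp only [e4, e5] at step2'
  calc (wdist A (γ j) (v * γ k) : ℝ)
      ≤ (wdist A (γ j) (π j) : ℝ) + (wdist A (π j) (v * γ k) : ℝ) :=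
        rdist_triangle A hA _ _ _
    _ ≤ δ + δ := add_le_add step1 step2'

end Track
section Disp

variable (A : Finset G) (hA : Subgroup.closure (A : Set G) = ⊤)
include hA

omit hA in
theorem geodesic_dist_from_one {γ : ℕ → G} {g : G} (hγ : IsGeodesic A γ 1 g)
    {j : ℕ} (hj : j ≤ wdist A 1 g) : wdist A 1 (γ j) = j := by
  obtain ⟨h0, _, h2⟩ := hγ
  have := h2 0 j (Nat.zero_le _) hj
  rw [h0] at this
  simpa [Nat.dist] using this

omit hA in
theorem geodesic_point_sum {γ : ℕ → G} {g : G} (hγ : IsGeodesic A γ 1 g)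
    {j : ℕ} (hj : j ≤ wdist A 1 g) :
    wdist A 1 (γ j) + wdist A (γ j) g ≤ wdist A 1 g := by
  obtain ⟨h0, h1, h2⟩ := hγ
  have e1 : wdist A 1 (γ j) = j := geodesic_dist_from_one A ⟨h0, h1, h2⟩ hj
  have e2 := h2 j (wdist A 1 g) hj le_rfl
  rw [h1] at e2
  rw [e1, e2]
  simp [Nat.dist]
  omega

/-- Displacement of points on an initial segment of a geodesic `[1,g]` by `x`,
when the Gromov product `(xg, g)₁` is at least `t`. -/
theorem displacement {δ : ℝ} (hδ : 0 ≤ δ) (htrim : TrimCayley A δ) (x g : G)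
    {γ : ℕ → G} (hγ : IsGeodesic A γ 1 g)
    {t : ℕ} (ht : (t : ℝ) ≤ gp A 1 (x * g) g) {j : ℕ} (hj : j ≤ t) :
    (wdist A (γ j) (x * γ j) : ℝ) ≤ δ + δ + 3 * (wl A x : ℝ) := by
  set s := wdist A 1 g with hs
  set R := wl A x with hR
  have hgp : (j : ℝ) ≤ gp A 1 g (x * g) := by
    rw [gp_symm A hA]
    refine le_trans ?_ ht
    exact_mod_cast hj
  have hjs : j ≤ s := by
    have := le_trans hgp (gp_le_left A hA 1 g (x * g))
    exact_mod_cast this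
  rcases lt_or_ge j R with hcase | hcase
  · -- crude bound for j < R
    have e1 : wdist A (γ j) (γ 0) = j := by
      have := hγ.2.2 j 0 hjs (Nat.zero_le _)
      rw [this]; simp [Nat.dist]
    have e2 : wdist A (x * 1) (x * γ j) = wdist A 1 (γ j) := wdist_left_inv A x 1 (γ j)
    have e3 : wdist A 1 (γ j) = j := geodesic_dist_from_one A hγ hjs
    have tr1 := rdist_triangle A hA (γ j) 1 (x * γ j)
    have tr2 := rdist_triangle A hA (1 : G) x (x * γ j)
    have e4 : wdist A 1 x = R := by rw [hR, wdist_one_left]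
    have e5 : (wdist A x (x * γ j) : ℝ) = j := by
      have h9 : wdist A x (x * γ j) = j := by
        calc wdist A x (x * γ j) = wdist A (x * 1) (x * γ j) := by rw [mul_one]
          _ = j := by rw [e2, e3]
      exact_mod_cast h9
    have e6 : (wdist A (γ j) 1 : ℝ) = j := by
      have := hγ.1
      rw [← this]
      exact_mod_cast congrArg (Nat.cast (R := ℝ)) e1
    have : (wdist A (γ j) (x * γ j) : ℝ) ≤ j + (R + j) := by
      have c2 : (wdist A 1 (x * γ j) : ℝ) ≤ R + j := by
        rw [← e4, ← e5]; exact tr2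
      calc (wdist A (γ j) (x * γ j) : ℝ)
          ≤ (wdist A (γ j) 1 : ℝ) + (wdist A 1 (x * γ j) : ℝ) := tr1
        _ ≤ j + (R + j) := by rw [e6]; linarith
    have : (wdist A (γ j) (x * γ j) : ℝ) ≤ 3 * R := by
      have hjR : (j : ℝ) ≤ R := by exact_mod_cast hcase.le
      linarith
    linarith
  · -- main case, via track
    obtain ⟨π, hπ⟩ := exists_geodesic_one A hA (x * g)
    set Q := wdist A 1 (x * g) with hQ
    have htri1 : Q ≤ R + s := by
      rw [hQ, wdist_one_left, hR, hs, wdist_one_left]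
      exact wl_mul_le A hA x g
    have htri2 : s ≤ R + Q := by
      rw [hs, wdist_one_left, hR, hQ, wdist_one_left]
      have h1 : wl A g ≤ wl A x⁻¹ + wl A (x * g) := by
        have := wl_mul_le A hA x⁻¹ (x * g)
        simpa [mul_assoc] using this
      rwa [wl_inv A hA] at h1
    have hj2 : Q + R ≤ 2 * j + s := by omega
    have htrack := track A hA htrim g x γ π hγ hπ j hgp hj2
    set k := (j + s) - Q with hk
    have hjQ : j ≤ Q := by
      have := le_trans hgp (gp_le_right A hA 1 g (x * g))
      exact_mod_cast this
    have hkk : k ≤ s ∧ k + Q = j + s := by omega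
    have hdk : Nat.dist k j ≤ R := by
      simp [Nat.dist]; omega
    have e7 : wdist A (x * γ k) (x * γ j) = Nat.dist k j := by
      rw [wdist_left_inv]
      exact hγ.2.2 k j hkk.1 hjs
    calc (wdist A (γ j) (x * γ j) : ℝ)
        ≤ (wdist A (γ j) (x * γ k) : ℝ) + (wdist A (x * γ k) (x * γ j) : ℝ) :=
          rdist_triangle A hA _ _ _
      _ ≤ (δ + δ) + R := by
          refine add_le_add htrack ?_
          rw [e7]
          exact_mod_cast hdk
      _ ≤ δ + δ + 3 * R := by
          have : (0 : ℝ) ≤ R := Nat.cast_nonneg R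
          linarith

/-- The four-point (hyperbolicity) inequality for the Gromov product, from trimness. -/
theorem fourpt {δ : ℝ} (hδ : 0 ≤ δ) (htrim : TrimCayley A δ) (a b c : G) :
    min (gp A 1 a b) (gp A 1 b c) - (δ + 1) ≤ gp A 1 a c := by
  obtain ⟨α, hα⟩ := exists_geodesic_one A hA a
  obtain ⟨β, hβ⟩ := exists_geodesic_one A hA b
  obtain ⟨χ, hχ⟩ := exists_geodesic_one A hA c
  set m := min (gp A 1 a b) (gp A 1 b c) with hm
  have hm0 : 0 ≤ m := le_min (gp_nonneg A hA 1 a b) (gp_nonneg A hA 1 b c)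
  set t := ⌊m⌋₊ with htdef
  have ht1 : (t : ℝ) ≤ gp A 1 a b := le_trans (Nat.floor_le hm0) (min_le_left _ _)
  have ht2 : (t : ℝ) ≤ gp A 1 b c := le_trans (Nat.floor_le hm0) (min_le_right _ _)
  have htm : m - 1 ≤ (t : ℝ) := by
    have := Nat.lt_floor_add_one m
    linarith
  have d1 : (wdist A (α t) (β t) : ℝ) ≤ δ := htrim a b 1 α β hα hβ t ht1
  have d2 : (wdist A (β t) (χ t) : ℝ) ≤ δ := htrim b c 1 β χ hβ hχ t ht2
  have hta : t ≤ wdist A 1 a := by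
    have := le_trans ht1 (gp_le_left A hA 1 a b)
    exact_mod_cast this
  have htc : t ≤ wdist A 1 c := by
    have := le_trans ht2 (gp_le_right A hA 1 b c)
    exact_mod_cast this
  have ea : wdist A (α t) a = wdist A 1 a - t := by
    have := hα.2.2 t (wdist A 1 a) hta le_rfl
    rw [hα.2.1] at this
    rw [this, Nat.dist_eq_sub_of_le hta]
  have ec : wdist A (χ t) c = wdist A 1 c - t := by
    have := hχ.2.2 t (wdist A 1 c) htc le_rfl
    rw [hχ.2.1] at this
    rw [this, Nat.dist_eq_sub_of_le htc]
  have hac : (wdist A a c : ℝ) ≤ ((wdist A 1 a : ℕ) - t : ℕ) + δ + δ + ((wdist A 1 c : ℕ) - t : ℕ) := by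
    have t1 := rdist_triangle A hA a (α t) c
    have t2 := rdist_triangle A hA (α t) (β t) c
    have t3 := rdist_triangle A hA (β t) (χ t) c
    have s1 : (wdist A a (α t) : ℝ) = ((wdist A 1 a - t : ℕ) : ℝ) := by
      rw [wdist_symm A hA a (α t), ea]
    have s2 : (wdist A (χ t) c : ℝ) = ((wdist A 1 c - t : ℕ) : ℝ) := by
      exact_mod_cast congrArg (Nat.cast (R := ℝ)) ec
    rw [s1] at t1
    linarith [t1, t2, t3, d1, d2, s2.le, s2.ge]
  have ca : ((wdist A 1 a - t : ℕ) : ℝ) = (wdist A 1 a : ℝ) - t := by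
    exact Nat.cast_sub hta
  have cc : ((wdist A 1 c - t : ℕ) : ℝ) = (wdist A 1 c : ℝ) - t := by
    exact Nat.cast_sub htc
  rw [ca, cc] at hac
  rw [gp]
  linarith

end Disp
section Core

variable (A : Finset G) (hA : Subgroup.closure (A : Set G) = ⊤)
include hA

theorem no_escape {δ : ℝ} (hδ : 0 ≤ δ) (htrim : TrimCayley A δ) (M : ℕ)
    (σ : ℕ → G) (u : G)
    (hσ0 : σ 0 = 1)
    (hσray : ∀ i j : ℕ, wdist A (σ i) (σ j) = Nat.dist i j)
    (hufin : ¬ IsOfFinOrder u)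
    (hcomm : ∀ N : ℕ, ∃ s : ℕ, N ≤ s ∧ u * σ s = σ s * u)
    (hfar : ∀ (j : ℕ) (n : ℤ), (j : ℝ) ≤ (M : ℝ) + (wdist A (σ j) (u ^ n) : ℝ)) :
    False := by
  classical
  have hwdone : ∀ i : ℕ, wdist A 1 (σ i) = i := by
    intro i
    have := hσray 0 i
    rw [hσ0] at this
    simpa [Nat.dist] using this
  have hgeo : ∀ s : ℕ, IsGeodesic A σ 1 (σ s) := by
    intro s
    refine ⟨hσ0, by rw [hwdone], fun i j _ _ => hσray i j⟩
  have hwlσ : ∀ i : ℕ, wl A (σ i) = i := by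
    intro i
    have := hwdone i
    rwa [wdist_one_left] at this
  -- Claim A : σ fellow-travels its translate by u^n between commuting points
  have claimA : ∀ (n : ℤ) (s : ℕ), u * σ s = σ s * u →
      ∀ j : ℕ, wl A (u ^ n) ≤ j → j + wl A (u ^ n) ≤ s →
      (wdist A (σ j) (u ^ n * σ ((j + s) - wdist A 1 (u ^ n * σ s))) : ℝ) ≤ δ + δ := by
    intro n s hcom j hRj hjs
    set R := wl A (u ^ n) with hR
    have hcomn : u ^ n * σ s = σ s * u ^ n :=
      ((Commute.zpow_left (a := u) (b := σ s) hcom n)).eq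
    obtain ⟨π, hπ⟩ := exists_geodesic_one A hA (u ^ n * σ s)
    set Q := wdist A 1 (u ^ n * σ s) with hQ
    have hdcq : wdist A (σ s) (u ^ n * σ s) = R := by
      rw [wdist]
      rw [hcomn]
      congr 1
      group
    have hQle : Q ≤ R + s := by
      rw [hQ, wdist_one_left]
      have := wl_mul_le A hA (u ^ n) (σ s)
      rwa [hwlσ] at this
    have hQge : s ≤ Q + R := by
      have htr := wdist_triangle A hA 1 (u ^ n * σ s) (σ s)
      rw [hwdone, wdist_symm A hA (u ^ n * σ s) (σ s), hdcq] at htr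
      omega
    have hgp : (j : ℝ) ≤ gp A 1 (σ s) (u ^ n * σ s) := by
      rw [gp, hwdone, hdcq, ← hQ]
      have h1 : (j : ℝ) + (R : ℝ) ≤ (s : ℝ) := by exact_mod_cast hjs
      have h2 : (s : ℝ) ≤ (Q : ℝ) + (R : ℝ) := by exact_mod_cast hQge
      linarith
    have hj2 : Q + R ≤ 2 * j + s := by omega
    have := track A hA htrim (σ s) (u ^ n) σ π (hgeo s) hπ j hgp (by rw [hwdone]; exact hj2)
    rwa [hwdone, ← hQ] at this
  -- Displacement bound for all points far enough along the ray
  have dispσ : ∀ (n : ℤ) (i : ℕ), wl A (u ^ n) ≤ i →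
      (wdist A (σ i) (u ^ n * σ i) : ℝ) ≤ (M : ℝ) + 4 * δ := by
    intro n i hRi
    set R := wl A (u ^ n) with hR
    obtain ⟨s, hsge, hcom⟩ := hcomm (2 * R + i + 1)
    set Q := wdist A 1 (u ^ n * σ s) with hQ
    have hQle : Q ≤ R + s := by
      rw [hQ, wdist_one_left]
      have := wl_mul_le A hA (u ^ n) (σ s)
      rwa [hwlσ] at this
    set kR := (R + s) - Q with hkR
    set ki := (i + s) - Q with hki
    have hA1 := claimA n s hcom R le_rfl (by omega)
    have hA2 := claimA n s hcom i hRi (by omega)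
    rw [← hQ, ← hkR] at hA1
    rw [← hQ, ← hki] at hA2
    -- (a) upper bound on kR
    have hua : (wdist A (σ kR) (u ^ (-n)) : ℝ) ≤ (δ + δ) + R := by
      have e1 : wdist A (u ^ (-n) * σ R) (σ kR) = wdist A (σ R) (u ^ n * σ kR) := by
        have : u ^ (-n) * (u ^ n * σ kR) = σ kR := by
          rw [← mul_assoc, ← zpow_add]
          simp
        calc wdist A (u ^ (-n) * σ R) (σ kR)
            = wdist A (u ^ (-n) * σ R) (u ^ (-n) * (u ^ n * σ kR)) := by rw [this]
          _ = wdist A (σ R) (u ^ n * σ kR) := wdist_left_inv A _ _ _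
      have e2 : wdist A (u ^ (-n) * σ R) (u ^ (-n)) = R := by
        have : wdist A (u ^ (-n) * σ R) (u ^ (-n) * 1) = wdist A (σ R) 1 :=
          wdist_left_inv A _ _ _
        rw [mul_one] at this
        rw [this, wdist_symm A hA, hwdone]
      calc (wdist A (σ kR) (u ^ (-n)) : ℝ)
          ≤ (wdist A (σ kR) (u ^ (-n) * σ R) : ℝ) + (wdist A (u ^ (-n) * σ R) (u ^ (-n)) : ℝ) :=
            rdist_triangle A hA _ _ _
        _ ≤ (δ + δ) + R := by
            rw [e2, wdist_symm A hA (σ kR) (u ^ (-n) * σ R), e1]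
            exact add_le_add hA1 le_rfl
    have hub : (wdist A (σ R) (u ^ n) : ℝ) ≤ (δ + δ) + kR := by
      have e3 : wdist A (u ^ n * σ kR) (u ^ n) = kR := by
        have : wdist A (u ^ n * σ kR) (u ^ n * 1) = wdist A (σ kR) 1 :=
          wdist_left_inv A _ _ _
        rw [mul_one] at this
        rw [this, wdist_symm A hA, hwdone]
      calc (wdist A (σ R) (u ^ n) : ℝ)
          ≤ (wdist A (σ R) (u ^ n * σ kR) : ℝ) + (wdist A (u ^ n * σ kR) (u ^ n) : ℝ) :=
            rdist_triangle A hA _ _ _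
        _ ≤ (δ + δ) + kR := by rw [e3]; exact add_le_add hA1 le_rfl
    have hfa := hfar kR (-n)
    have hfb := hfar R n
    have hkRub : (kR : ℝ) ≤ (M : ℝ) + 2 * δ + R := by linarith
    have hkRlb : (R : ℝ) ≤ (M : ℝ) + 2 * δ + kR := by linarith
    -- now the displacement at i
    have hdist : Nat.dist ki i = Nat.dist kR R := by
      have h1 : Q ≤ R + s := hQle
      simp only [hki, hkR, Nat.dist]
      omega
    have hdd : (Nat.dist kR R : ℝ) ≤ (M : ℝ) + 2 * δ := by
      rcases le_total kR R with h | h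
      · rw [Nat.dist_eq_sub_of_le h]
        push_cast [Nat.cast_sub h]
        linarith
      · rw [Nat.dist_eq_sub_of_le_right h]
        push_cast [Nat.cast_sub h]
        linarith
    have e4 : wdist A (u ^ n * σ ki) (u ^ n * σ i) = Nat.dist ki i := by
      rw [wdist_left_inv]; exact hσray ki i
    calc (wdist A (σ i) (u ^ n * σ i) : ℝ)
        ≤ (wdist A (σ i) (u ^ n * σ ki) : ℝ) + (wdist A (u ^ n * σ ki) (u ^ n * σ i) : ℝ) :=
          rdist_triangle A hA _ _ _
      _ ≤ (δ + δ) + ((M : ℝ) + 2 * δ) := by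
          refine add_le_add hA2 ?_
          rw [e4, hdist]
          exact hdd
      _ = (M : ℝ) + 4 * δ := by ring
  -- lower and upper bounds on Gromov products with the ray
  have phiup : ∀ (k : ℤ) (i : ℕ), gp A 1 (u ^ k) (σ i) ≤ ((wl A (u ^ k) : ℝ) + M) / 2 := by
    intro k i
    have hf := hfar i k
    have hsym : wdist A (u ^ k) (σ i) = wdist A (σ i) (u ^ k) := wdist_symm A hA _ _
    rw [gp, wdist_one_left, hwdone, hsym]
    linarith
  have philow : ∀ (k : ℤ) (i : ℕ), wl A (u ^ k) ≤ i →
      ((wl A (u ^ k) : ℝ) - ((M : ℝ) + 4 * δ)) / 2 ≤ gp A 1 (u ^ k) (σ i) := by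
    intro k i hki
    have hd := dispσ k i hki
    have e5 : wdist A (u ^ k * σ i) (σ i) = wdist A (σ i) (u ^ k * σ i) := wdist_symm A hA _ _
    have e6 : wdist A (u ^ k) (u ^ k * σ i) = i := by
      have : wdist A (u ^ k * 1) (u ^ k * σ i) = wdist A 1 (σ i) := wdist_left_inv A _ _ _
      rw [mul_one] at this
      rw [this, hwdone]
    have htr : (wdist A (u ^ k) (σ i) : ℝ) ≤ (i : ℝ) + ((M : ℝ) + 4 * δ) := by
      calc (wdist A (u ^ k) (σ i) : ℝ)
          ≤ (wdist A (u ^ k) (u ^ k * σ i) : ℝ) + (wdist A (u ^ k * σ i) (σ i) : ℝ) :=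
            rdist_triangle A hA _ _ _
        _ ≤ (i : ℝ) + ((M : ℝ) + 4 * δ) := by
            rw [e6, e5]
            exact add_le_add le_rfl hd
    rw [gp, wdist_one_left, hwdone]
    linarith
  -- R is "max-subadditive"
  have hRneg : ∀ n : ℤ, wl A (u ^ (-n)) = wl A (u ^ n) := by
    intro n
    rw [zpow_neg, wl_inv A hA]
  have Rflat : ∀ n m : ℤ, (wl A (u ^ (n + m)) : ℝ) ≤
      max (wl A (u ^ n) : ℝ) (wl A (u ^ m) : ℝ) + ((M : ℝ) + 4 * δ + 2 * (δ + 1)) := by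
    intro n m
    set i := max (wl A (u ^ n)) (wl A (u ^ m)) with hi
    have h4 := fourpt A hA hδ htrim (u ^ (-n)) (σ i) (u ^ m)
    have hl1 := philow (-n) i (by rw [hRneg]; exact le_max_left _ _)
    have hl2 := philow m i (le_max_right _ _)
    have hsy : gp A 1 (σ i) (u ^ m) = gp A 1 (u ^ m) (σ i) := gp_symm A hA _ _ _
    have hmain : gp A 1 (u ^ (-n)) (u ^ m) =
        ((wl A (u ^ n) : ℝ) + (wl A (u ^ m) : ℝ) - (wl A (u ^ (n + m)) : ℝ)) / 2 := by
      have e7 : wdist A 1 (u ^ (-n)) = wl A (u ^ n) := by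
        rw [wdist_one_left, hRneg]
      have e8 : wdist A 1 (u ^ m) = wl A (u ^ m) := wdist_one_left A _
      have e9 : wdist A (u ^ (-n)) (u ^ m) = wl A (u ^ (n + m)) := by
        rw [wdist]
        congr 1
        rw [zpow_neg, inv_inv, ← zpow_add]
      rw [gp, e7, e8, e9]
    rw [hmain, hsy] at h4
    rw [hRneg] at hl1
    rcases le_total (wl A (u ^ n) : ℝ) (wl A (u ^ m) : ℝ) with h | h
    · rw [max_eq_right h]
      have hmin : min (gp A 1 (u ^ (-n)) (σ i)) (gp A 1 (u ^ m) (σ i)) ≥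
          ((wl A (u ^ n) : ℝ) - ((M : ℝ) + 4 * δ)) / 2 := by
        refine le_min hl1 (le_trans ?_ hl2)
        linarith
      linarith [le_min_iff.mp (le_refl (min (gp A 1 (u ^ (-n)) (σ i)) (gp A 1 (u ^ m) (σ i)))), hmin, h4]
    · rw [max_eq_left h]
      have hmin : min (gp A 1 (u ^ (-n)) (σ i)) (gp A 1 (u ^ m) (σ i)) ≥
          ((wl A (u ^ m) : ℝ) - ((M : ℝ) + 4 * δ)) / 2 := by
        refine le_min (le_trans ?_ hl1) hl2
        linarith
      linarith [hmin, h4]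
  -- powers of two have slowly growing length
  have pow2 : ∀ jj : ℕ, (wl A (u ^ ((2 : ℤ) ^ jj)) : ℝ) ≤
      (wl A u : ℝ) + jj * ((M : ℝ) + 4 * δ + 2 * (δ + 1)) := by
    intro jj
    induction jj with
    | zero => simp
    | succ p ih =>
      have he : ((2 : ℤ) ^ (p + 1)) = (2 : ℤ) ^ p + (2 : ℤ) ^ p := by ring
      have := Rflat ((2 : ℤ) ^ p) ((2 : ℤ) ^ p)
      rw [← he, max_self] at this
      push_cast
      push_cast at ih
      linarith
  -- final pigeonhole
  set E : ℕ := M + ⌈4 * δ⌉₊ with hE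
  set N := (ballF A E).card with hN
  set c₅ : ℕ := M + ⌈6 * δ⌉₊ + 2 with hc₅
  set istar : ℕ := wl A u + (N + 1) * c₅ with histar
  have hRsmall : ∀ jj : ℕ, jj ≤ N → wl A (u ^ ((2 : ℤ) ^ jj)) ≤ istar := by
    intro jj hjj
    have h1 := pow2 jj
    have h2 : (wl A (u ^ ((2 : ℤ) ^ jj)) : ℝ) ≤ (istar : ℝ) := by
      have hc : ((M : ℝ) + 4 * δ + 2 * (δ + 1)) ≤ (c₅ : ℝ) := by
        have := Nat.le_ceil (6 * δ)
        push_cast [hc₅]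
        linarith
      have hjN : (jj : ℝ) ≤ (N : ℝ) := by exact_mod_cast hjj
      have hcpos : (0 : ℝ) ≤ (M : ℝ) + 4 * δ + 2 * (δ + 1) := by positivity
      have hi : (istar : ℝ) = (wl A u : ℝ) + ((N : ℝ) + 1) * (c₅ : ℝ) := by
        rw [histar]; push_cast; ring
      have : (jj : ℝ) * ((M : ℝ) + 4 * δ + 2 * (δ + 1)) ≤ (N : ℝ) * (c₅ : ℝ) := by
        calc (jj : ℝ) * ((M : ℝ) + 4 * δ + 2 * (δ + 1)) ≤ (N : ℝ) * ((M : ℝ) + 4 * δ + 2 * (δ + 1)) :=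
              mul_le_mul_of_nonneg_right hjN hcpos
          _ ≤ (N : ℝ) * (c₅ : ℝ) := mul_le_mul_of_nonneg_left hc (Nat.cast_nonneg N)
      have hcnn : (0:ℝ) ≤ (c₅ : ℝ) := Nat.cast_nonneg _
      rw [hi]
      linarith
    exact_mod_cast h2
  have hmem : ∀ jj : ℕ, jj ≤ N → ((σ istar)⁻¹ * (u ^ ((2 : ℤ) ^ jj) * σ istar)) ∈ ballF A E := by
    intro jj hjj
    have hd := dispσ ((2 : ℤ) ^ jj) istar (hRsmall jj hjj)
    have hwle : wl A ((σ istar)⁻¹ * (u ^ ((2 : ℤ) ^ jj) * σ istar)) ≤ E := by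
      have : (wl A ((σ istar)⁻¹ * (u ^ ((2 : ℤ) ^ jj) * σ istar)) : ℝ) ≤ (E : ℝ) := by
        have hE4 : (M : ℝ) + 4 * δ ≤ (E : ℝ) := by
          have := Nat.le_ceil (4 * δ)
          push_cast [hE]
          linarith
        exact le_trans hd hE4
      exact_mod_cast this
    exact wl_mem_ballF A hA hwle
  have hinj : ∀ jj jj' : ℕ, jj ≤ N → jj' ≤ N →
      (σ istar)⁻¹ * (u ^ ((2 : ℤ) ^ jj) * σ istar) = (σ istar)⁻¹ * (u ^ ((2 : ℤ) ^ jj') * σ istar) →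
      jj = jj' := by
    intro jj jj' _ _ heq
    have h1 : u ^ ((2 : ℤ) ^ jj) = u ^ ((2 : ℤ) ^ jj') := by
      have := mul_left_cancel heq
      exact mul_right_cancel this
    have h2 : ((2 : ℤ) ^ jj) = ((2 : ℤ) ^ jj') :=
      (injective_zpow_iff_not_isOfFinOrder.mpr hufin) h1
    have h3 : ((2 : ℕ) ^ jj : ℤ) = ((2 : ℕ) ^ jj' : ℤ) := by push_cast; exact_mod_cast h2
    have h4 : (2 : ℕ) ^ jj = (2 : ℕ) ^ jj' := by exact_mod_cast h3
    exact Nat.pow_right_injective le_rfl h4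
  -- contradiction by counting
  have hcard : (Finset.range (N + 1)).card ≤ N := by
    refine Finset.card_le_card_of_injOn
      (fun jj => (σ istar)⁻¹ * (u ^ ((2 : ℤ) ^ jj) * σ istar)) ?_ ?_
    · intro jj hjj
      exact hmem jj (by simpa using Nat.lt_succ_iff.mp (Finset.mem_range.mp hjj))
    · intro jj hjj jj' hjj' heq
      exact hinj jj jj' (Nat.lt_succ_iff.mp (Finset.mem_range.mp hjj))
        (Nat.lt_succ_iff.mp (Finset.mem_range.mp hjj')) heq
  simp only [Finset.card_range] at hcard
  omega

end Core
section Key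

variable (A : Finset G) (hA : Subgroup.closure (A : Set G) = ⊤)
include hA

theorem keyProp {δ : ℝ} (hδ : 0 ≤ δ) (htrim : TrimCayley A δ) (x : G)
    (hx : ¬ IsOfFinOrder x) (M : ℕ) :
    ∃ Lm : ℕ, ∀ g : G, ((Lm : ℝ) ≤ gp A 1 (x * g) g) →
      ∃ n : ℤ, (M : ℝ) ≤ gp A 1 g (x ^ n) := by
  classical
  by_contra hcon
  push_neg at hcon
  choose gs hg1 hg2 using hcon
  choose γs hγs using fun t : ℕ => exists_geodesic_one A hA (gs t)
  have hts : ∀ t : ℕ, t ≤ wdist A 1 (gs t) := by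
    intro t
    have := le_trans (hg1 t) (gp_le_right A hA 1 (x * gs t) (gs t))
    exact_mod_cast this
  have F1 : ∀ t j : ℕ, j ≤ t → (wdist A (γs t j) (x * γs t j) : ℝ) ≤ δ + δ + 3 * wl A x :=
    fun t j hj => displacement A hA hδ htrim x (gs t) (hγs t) (hg1 t) hj
  have F2 : ∀ t j : ℕ, j ≤ t → ∀ n : ℤ,
      (j : ℝ) ≤ (M : ℝ) + (wdist A (γs t j) (x ^ n) : ℝ) := by
    intro t j hj n
    have hjs : j ≤ wdist A 1 (gs t) := le_trans hj (hts t)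
    have h1 := geodesic_dist_from_one A (hγs t) hjs
    have h2 := geodesic_point_sum A (hγs t) hjs
    have h3 := gp_lower_via_point A hA (gs t) (x ^ n) (γs t j) j h1 h2
    have hlt := hg2 t n
    linarith
  have F3 : ∀ t i j : ℕ, i ≤ t → j ≤ t → wdist A (γs t i) (γs t j) = Nat.dist i j :=
    fun t i j hi hj => (hγs t).2.2 i j (le_trans hi (hts t)) (le_trans hj (hts t))
  have F4 : ∀ t : ℕ, γs t 0 = 1 := fun t => (hγs t).1
  -- ultrafilter limit geodesic ray
  set U : Ultrafilter ℕ := Ultrafilter.of Filter.atTop with hUdef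
  have hU : ∀ i : ℕ, {t : ℕ | i ≤ t} ∈ U := by
    intro i
    exact (Ultrafilter.of_le Filter.atTop) (Filter.mem_atTop i)
  have hρ : ∀ i : ℕ, ∃ v : G, {t : ℕ | i ≤ t ∧ γs t i = v} ∈ U := by
    intro i
    have hsub : {t : ℕ | i ≤ t} ⊆
        ⋃ v ∈ ((ballF A i : Finset G) : Set G), {t : ℕ | i ≤ t ∧ γs t i = v} := by
      intro t ht
      have h5 : wl A (γs t i) ≤ i := by
        have h6 := geodesic_dist_from_one A (hγs t) (le_trans ht (hts t))
        rw [wdist_one_left] at h6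
        omega
      simp only [Set.mem_iUnion]
      exact ⟨γs t i, wl_mem_ballF A hA h5, ht, rfl⟩
    have hmem : (⋃ v ∈ ((ballF A i : Finset G) : Set G), {t : ℕ | i ≤ t ∧ γs t i = v}) ∈ U :=
      Filter.mem_of_superset (hU i) hsub
    rcases (Ultrafilter.finite_biUnion_mem_iff (ballF A i).finite_toSet).mp hmem with ⟨v, _, hv⟩
    exact ⟨v, hv⟩
  choose ρ hρs using hρ
  have pick2 : ∀ i j : ℕ, ∃ t, (i ≤ t ∧ γs t i = ρ i) ∧ (j ≤ t ∧ γs t j = ρ j) := by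
    intro i j
    obtain ⟨t, ht⟩ := Ultrafilter.nonempty_of_mem (Filter.inter_mem (hρs i) (hρs j))
    exact ⟨t, ht.1, ht.2⟩
  have ρ0 : ρ 0 = 1 := by
    obtain ⟨t, h1, _⟩ := pick2 0 0
    rw [← h1.2, F4]
  have ρray : ∀ i j : ℕ, wdist A (ρ i) (ρ j) = Nat.dist i j := by
    intro i j
    obtain ⟨t, h1, h2⟩ := pick2 i j
    rw [← h1.2, ← h2.2]
    exact F3 t i j h1.1 h2.1
  have ρdisp : ∀ i : ℕ, (wdist A (ρ i) (x * ρ i) : ℝ) ≤ δ + δ + 3 * wl A x := by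
    intro i
    obtain ⟨t, h1, _⟩ := pick2 i i
    rw [← h1.2]
    exact F1 t i h1.1
  have ρfar : ∀ (i : ℕ) (n : ℤ), (i : ℝ) ≤ (M : ℝ) + (wdist A (ρ i) (x ^ n) : ℝ) := by
    intro i n
    obtain ⟨t, h1, _⟩ := pick2 i i
    rw [← h1.2]
    exact F2 t i h1.1 n
  -- pigeonhole on the conjugates along the ray
  set C0 : ℕ := ⌈δ + δ⌉₊ + 3 * wl A x with hC0
  have hfib : ∀ i : ℕ, (ρ i)⁻¹ * x * ρ i ∈ ballF A C0 := by
    intro i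
    have h7 : (wl A ((ρ i)⁻¹ * x * ρ i) : ℝ) ≤ (C0 : ℝ) := by
      have h8 : wdist A (ρ i) (x * ρ i) = wl A ((ρ i)⁻¹ * x * ρ i) := by
        rw [wdist, mul_assoc]
      have h9 := ρdisp i
      rw [h8] at h9
      have h10 : δ + δ + 3 * (wl A x : ℝ) ≤ (C0 : ℝ) := by
        have := Nat.le_ceil (δ + δ)
        rw [hC0]
        push_cast
        linarith
      linarith
    have : wl A ((ρ i)⁻¹ * x * ρ i) ≤ C0 := by exact_mod_cast h7
    exact wl_mem_ballF A hA this
  obtain ⟨u, hSinf⟩ := exists_infinite_fiber' (f := fun i => (ρ i)⁻¹ * x * ρ i) hfib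
  obtain ⟨i₀, hi₀⟩ := hSinf.nonempty
  have hi₀' : (ρ i₀)⁻¹ * x * ρ i₀ = u := hi₀
  set σ : ℕ → G := fun j => (ρ i₀)⁻¹ * ρ (i₀ + j) with hσdef
  have σ0 : σ 0 = 1 := by
    show (ρ i₀)⁻¹ * ρ (i₀ + 0) = 1
    rw [add_zero]
    group
  have σray : ∀ i j : ℕ, wdist A (σ i) (σ j) = Nat.dist i j := by
    intro i j
    show wdist A ((ρ i₀)⁻¹ * ρ (i₀ + i)) ((ρ i₀)⁻¹ * ρ (i₀ + j)) = Nat.dist i j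
    rw [wdist_left_inv, ρray]
    simp [Nat.dist]
    omega
  -- conjugation facts
  have upow : ∀ n : ℤ, u ^ n = (ρ i₀)⁻¹ * x ^ n * ρ i₀ := by
    intro n
    rw [← hi₀']
    have : (ρ i₀)⁻¹ * x * ρ i₀ = MulAut.conj (ρ i₀)⁻¹ x := by
      simp [MulAut.conj_apply]
    rw [this, ← map_zpow]
    simp [MulAut.conj_apply]
  have hufin : ¬ IsOfFinOrder u := by
    intro hu
    apply hx
    rw [isOfFinOrder_iff_pow_eq_one] at hu ⊢
    obtain ⟨k, hk0, hk⟩ := hu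
    refine ⟨k, hk0, ?_⟩
    have : u ^ (k : ℤ) = 1 := by rw [zpow_natCast, hk]
    rw [upow k] at this
    have h11 : x ^ (k : ℤ) = 1 := by
      have := congrArg (fun w => ρ i₀ * w * (ρ i₀)⁻¹) this
      simpa [mul_assoc] using this
    rw [zpow_natCast] at h11
    exact h11
  have ucomm : ∀ N : ℕ, ∃ s : ℕ, N ≤ s ∧ u * σ s = σ s * u := by
    intro N
    obtain ⟨b, hbS, hbgt⟩ := hSinf.exists_gt (i₀ + N)
    refine ⟨b - i₀, by omega, ?_⟩
    have hb : i₀ + (b - i₀) = b := by omega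
    have hbu : (ρ b)⁻¹ * x * ρ b = u := hbS
    have hσs : σ (b - i₀) = (ρ i₀)⁻¹ * ρ b := by
      show (ρ i₀)⁻¹ * ρ (i₀ + (b - i₀)) = (ρ i₀)⁻¹ * ρ b
      rw [hb]
    have hkey : (ρ i₀)⁻¹ * x * ρ i₀ = (ρ b)⁻¹ * x * ρ b := by rw [hi₀', hbu]
    rw [hσs, ← hi₀']
    conv_rhs => rw [hkey]
    group
  have ufar : ∀ (j : ℕ) (n : ℤ), (j : ℝ) ≤ (M : ℝ) + (wdist A (σ j) (u ^ n) : ℝ) := by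
    intro j n
    have e1 : wdist A (σ j) (u ^ n) = wdist A (ρ (i₀ + j)) (x ^ n * ρ i₀) := by
      rw [upow n]
      show wdist A ((ρ i₀)⁻¹ * ρ (i₀ + j)) ((ρ i₀)⁻¹ * x ^ n * ρ i₀) = _
      rw [mul_assoc]
      exact wdist_left_inv A (ρ i₀)⁻¹ _ _
    have e2 : wdist A (x ^ n * ρ i₀) (x ^ n) = i₀ := by
      have h12 : wdist A (x ^ n * ρ i₀) (x ^ n * 1) = wdist A (ρ i₀) 1 := wdist_left_inv A _ _ _
      rw [mul_one] at h12
      rw [h12, wdist_symm A hA]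
      have := ρray 0 i₀
      rw [ρ0] at this
      simpa [Nat.dist] using this
    have htr := rdist_triangle A hA (ρ (i₀ + j)) (x ^ n * ρ i₀) (x ^ n)
    have hfarj := ρfar (i₀ + j) n
    have e3 : wdist A (ρ (i₀ + j)) (x ^ n) = wdist A (x ^ n) (ρ (i₀ + j)) := wdist_symm A hA _ _
    have e4 : wdist A (x ^ n * ρ i₀) (ρ (i₀ + j)) = wdist A (ρ (i₀ + j)) (x ^ n * ρ i₀) :=
      wdist_symm A hA _ _
    rw [e1]
    have hcast : ((i₀ + j : ℕ) : ℝ) = (i₀ : ℝ) + (j : ℝ) := by push_cast; ring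
    rw [hcast] at hfarj
    rw [e2] at htr
    have e3' : (wdist A (ρ (i₀ + j)) (x ^ n) : ℝ) = (wdist A (x ^ n) (ρ (i₀ + j)) : ℝ) := by
      rw [e3]
    linarith [htr, hfarj, e3'.le, e3'.ge, (by rw [e4] :
      (wdist A (x ^ n * ρ i₀) (ρ (i₀ + j)) : ℝ) = (wdist A (ρ (i₀ + j)) (x ^ n * ρ i₀) : ℝ))]
  exact no_escape A hA hδ htrim M σ u σ0 σray hufin ucomm ufar

end Key

/-- **Proposition 6.4.** Let `G` be word-hyperbolic with finite generating set `A`, whose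
Cayley graph `Γ(G,A)` has `δ`-trim geodesic triangles, and let `x ∈ G` have infinite
order. Then for every `L > 0` there is `T = T(x,L)`, with `T(x,L) → ∞` as `L → ∞`, such
that whenever `g ∈ G` satisfies `(xg, g)₁ ≥ L`, one has `(g, ⟨x⟩)₁ ≥ T`. -/
theorem gromov_product_with_cyclic_subgroup_large
    (hG : WordHyperbolic G) (A : Finset G) (hA : Subgroup.closure (A : Set G) = ⊤)
    (δ : ℝ) (hδ : 0 ≤ δ) (htrim : TrimCayley A δ)
    (x : G) (hx : ¬ IsOfFinOrder x) :
    ∃ T : ℝ → ℝ, Filter.Tendsto T Filter.atTop Filter.atTop ∧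
      ∀ L : ℝ, 0 < L → ∀ g : G, L ≤ gp A 1 (x * g) g →
        ((T L : ℝ) : EReal) ≤ ⨆ n : ℤ, ((gp A 1 g (x ^ n) : ℝ) : EReal) := by
  classical
  choose Lfun hLfun using fun M : ℕ => keyProp A hA hδ htrim x hx M
  set gmax : ℕ → ℕ := fun M => (Finset.range (M + 1)).sup Lfun with hgmaxdef
  have hgm : ∀ M : ℕ, Lfun M ≤ gmax M :=
    fun M => Finset.le_sup (Finset.self_mem_range_succ M)
  set T : ℝ → ℝ :=
    fun L => ((Nat.findGreatest (fun m => gmax m ≤ ⌊L⌋₊) ⌊L⌋₊ : ℕ) : ℝ) with hTdef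
  refine ⟨T, ?_, ?_⟩
  · rw [Filter.tendsto_atTop]
    intro b
    set Mb := ⌈b⌉₊ with hMb
    filter_upwards [Filter.eventually_ge_atTop ((max (gmax Mb) Mb : ℕ) : ℝ)] with L hL
    have h1 : max (gmax Mb) Mb ≤ ⌊L⌋₊ := Nat.le_floor hL
    have h2 : Mb ≤ Nat.findGreatest (fun m => gmax m ≤ ⌊L⌋₊) ⌊L⌋₊ :=
      Nat.le_findGreatest (le_trans (le_max_right _ _) h1) (le_trans (le_max_left _ _) h1)
    have h3 : b ≤ (Mb : ℝ) := Nat.le_ceil b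
    have h4 : ((Mb : ℕ) : ℝ) ≤ T L := by
      show ((Mb : ℕ) : ℝ) ≤ ((Nat.findGreatest (fun m => gmax m ≤ ⌊L⌋₊) ⌊L⌋₊ : ℕ) : ℝ)
      exact_mod_cast h2
    linarith
  · intro L hL g hg
    set m := Nat.findGreatest (fun m => gmax m ≤ ⌊L⌋₊) ⌊L⌋₊ with hm
    have hTL : T L = (m : ℝ) := rfl
    by_cases hm0 : m = 0
    · have hz : gp A 1 g (x ^ (0 : ℤ)) = 0 := by
        rw [zpow_zero, gp]
        have e1 : wdist A 1 (1 : G) = 0 := wdist_self A 1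
        have e2 : wdist A g 1 = wdist A 1 g := wdist_symm A hA g 1
        rw [e1, e2]
        ring
      refine le_trans ?_ (le_iSup (fun n : ℤ => ((gp A 1 g (x ^ n) : ℝ) : EReal)) 0)
      rw [hz, hTL, hm0]
      norm_num
    · have hP : gmax m ≤ ⌊L⌋₊ := by
        have h8 := Nat.findGreatest_of_ne_zero
          (P := fun k => gmax k ≤ ⌊L⌋₊) (n := ⌊L⌋₊) (m := m) hm.symm hm0
        exact h8
      have h5 : (Lfun m : ℝ) ≤ gp A 1 (x * g) g := by
        have h6 : (Lfun m : ℝ) ≤ (⌊L⌋₊ : ℝ) := by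
          exact_mod_cast le_trans (hgm m) hP
        have h7 : (⌊L⌋₊ : ℝ) ≤ L := Nat.floor_le hL.le
        linarith
      obtain ⟨n, hn⟩ := hLfun m g h5
      refine le_trans ?_ (le_iSup (fun n : ℤ => ((gp A 1 g (x ^ n) : ℝ) : EReal)) n)
      rw [hTL]
      exact_mod_cast EReal.coe_le_coe_iff.mpr hn
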